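/- arXiv:1905.05939 — 2 statements merged into one kernel-verified Lean document; each statement's English description precedes it below -/
import Mathlib

section
/- The Mrugala metric g^M = (1/2)(dx^a ⊗ dy_a + dy_a ⊗ dx^a) + λ⊗λ with λ = dz − y_a dx^a has signature (n+1, n): at each point of {y_a > 0} ⊂ ℝ^{2n+1} it is a nondegenerate symmetric bilinear form with n+1 positive and n negative eigenvalues. -/
/-!
The vectors `∂_{x^a} + y_a ∂_z + s ∂_{y_a}` are annihilated by `λ`, so on them the metric only
sees the pairing `dx^a ⊗ dy_a`, which gives them the Gram matrix `(s + t)/2 · δ_ab`. Taking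
`s = ±1`, together with `∂_z` (which is `g`-orthogonal to them and has norm `λ(∂_z)² = 1`) this
is an orthogonal frame of `n + 1 + n` non-null vectors. Such a family is linearly independent,
hence a basis by counting dimensions, and a form with an orthogonal basis of non-null vectors is
nondegenerate.
-/

/-- Tangent vectors on ℝ^{2n+1}: (dx-components, dy-components, dz-component). -/
abbrev TVec (n : ℕ) : Type := (Fin n → ℝ) × (Fin n → ℝ) × ℝ

/-- The contact form λ = dz − y_a dx^a. -/
def lamForm {n : ℕ} (y : Fin n → ℝ) (v : TVec n) : ℝ :=
  v.2.2 - ∑ a, y a * v.1 a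

/-- The Mrugala metric g^M = (1/2)(dx^a⊗dy_a + dy_a⊗dx^a) + λ⊗λ. -/
noncomputable def gM {n : ℕ} (y : Fin n → ℝ) (u v : TVec n) : ℝ :=
  (1 / 2) * ∑ a, (u.1 a * v.2.1 a + u.2.1 a * v.1 a) + lamForm y u * lamForm y v

theorem sum_single_mul_single {ι R : Type*} [Fintype ι] [DecidableEq ι]
    [NonUnitalNonAssocSemiring R] (a b : ι) (s t : R) :
    ∑ x, Pi.single a s x * Pi.single b t x = if a = b then s * t else 0 :=
  (single_dotProduct _ _ _).trans <| by rw [Pi.single_apply, mul_ite, mul_zero]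

namespace Mrugala

variable {n : ℕ} (y : Fin n → ℝ)

lemma gM_comm (u v : TVec n) : gM y u v = gM y v u := by
  simp only [gM, mul_comm (lamForm y u)]
  congr 2
  exact Finset.sum_congr rfl fun a _ => by ring

lemma lamForm_add (u v : TVec n) : lamForm y (u + v) = lamForm y u + lamForm y v := by
  simp only [lamForm, Prod.fst_add, Prod.snd_add, Pi.add_apply, mul_add, Finset.sum_add_distrib]
  ring

lemma lamForm_smul (c : ℝ) (v : TVec n) : lamForm y (c • v) = c * lamForm y v := by
  simp only [lamForm, Prod.smul_fst, Prod.smul_snd, Pi.smul_apply, smul_eq_mul, mul_sub,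
    Finset.mul_sum]
  congr 1
  exact Finset.sum_congr rfl fun a _ => by ring

lemma gM_add_left (u u' v : TVec n) : gM y (u + u') v = gM y u v + gM y u' v := by
  simp only [gM, lamForm_add, Prod.fst_add, Prod.snd_add, Pi.add_apply, add_mul,
    Finset.sum_add_distrib]
  ring

lemma gM_smul_left (c : ℝ) (u v : TVec n) : gM y (c • u) v = c * gM y u v := by
  simp only [gM, lamForm_smul, Prod.smul_fst, Prod.smul_snd, Pi.smul_apply, smul_eq_mul]
  simp_rw [mul_assoc c, ← mul_add c, ← Finset.mul_sum]
  ring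

noncomputable def gMForm : LinearMap.BilinForm ℝ (TVec n) :=
  LinearMap.mk₂ ℝ (gM y) (gM_add_left y) (gM_smul_left y)
    (fun u v v' => by rw [gM_comm y u, gM_add_left, gM_comm y v, gM_comm y v'])
    (fun c u v => by rw [gM_comm y u, gM_smul_left, gM_comm y v, smul_eq_mul])

@[simp] lemma gMForm_apply (u v : TVec n) : gMForm y u v = gM y u v := rfl

def contactVec (s : ℝ) (a : Fin n) : TVec n := (Pi.single a 1, Pi.single a s, y a)

def reebVec (n : ℕ) : TVec n := (0, 0, 1)

@[simp] lemma lamForm_contactVec (s : ℝ) (a : Fin n) : lamForm y (contactVec y s a) = 0 := by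
  simp [lamForm, contactVec, Pi.single_apply]

@[simp] lemma lamForm_reebVec : lamForm y (reebVec n) = 1 := by
  simp [lamForm, reebVec]

@[simp] lemma gM_contactVec_contactVec (s t : ℝ) (a b : Fin n) :
    gM y (contactVec y s a) (contactVec y t b) = if a = b then (s + t) / 2 else 0 := by
  simp only [gM, lamForm_contactVec, mul_zero, add_zero]
  simp only [contactVec, Finset.sum_add_distrib, sum_single_mul_single]
  split_ifs <;> ring

@[simp] lemma gM_contactVec_reebVec (s : ℝ) (a : Fin n) :
    gM y (contactVec y s a) (reebVec n) = 0 := by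
  simp only [gM, lamForm_contactVec, zero_mul, add_zero]
  simp [contactVec, reebVec]

@[simp] lemma gM_reebVec_contactVec (s : ℝ) (a : Fin n) :
    gM y (reebVec n) (contactVec y s a) = 0 := by
  rw [gM_comm, gM_contactVec_reebVec]

@[simp] lemma gM_reebVec_reebVec : gM y (reebVec n) (reebVec n) = 1 := by
  simp only [gM, lamForm_reebVec]
  simp [reebVec]

noncomputable def frame : Fin (n + 1 + n) → TVec n :=
  Fin.addCases (Fin.lastCases (reebVec n) (contactVec y 1)) (contactVec y (-1))

lemma gM_frame_frame (i j : Fin (n + 1 + n)) :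
    gM y (frame y i) (frame y j) = if i = j then (if (i : ℕ) < n + 1 then 1 else -1) else 0 := by
  induction i using Fin.addCases with
  | left i =>
    induction j using Fin.addCases with
    | left j =>
      induction i using Fin.lastCases <;> induction j using Fin.lastCases <;>
        simp [frame, Fin.ext_iff, Nat.ne_of_lt, Nat.ne_of_gt]
    | right j => induction i using Fin.lastCases <;> simp [frame, Fin.ext_iff] <;> omega
  | right i =>
    have hi : ¬n + 1 + (i : ℕ) ≤ n := by omega
    induction j using Fin.addCases with
    | left j => induction j using Fin.lastCases <;> simp [frame, Fin.ext_iff] <;> omega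
    | right j => simp [frame, Fin.ext_iff, hi]

lemma isOrthoᵢ_frame : (gMForm y).IsOrthoᵢ (frame y) := fun i j hij =>
  (gM_frame_frame y i j).trans (if_neg hij)

lemma gM_frame_self_ne_zero (i : Fin (n + 1 + n)) : gM y (frame y i) (frame y i) ≠ 0 := by
  rw [gM_frame_frame, if_pos rfl]
  split_ifs <;> norm_num

lemma linearIndependent_frame : LinearIndependent ℝ (frame y) :=
  LinearMap.linearIndependent_of_isOrthoᵢ (isOrthoᵢ_frame y) (gM_frame_self_ne_zero y)

lemma span_frame : Submodule.span ℝ (Set.range (frame y)) = ⊤ :=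
  (linearIndependent_frame y).span_eq_top_of_card_eq_finrank' (by
    simp only [Fintype.card_fin, Module.finrank_prod, Module.finrank_fintype_fun_eq_card,
      Module.finrank_self]
    omega)

lemma gMForm_separatingLeft : (gMForm y).SeparatingLeft := by
  let b := Module.Basis.mk (linearIndependent_frame y) (span_frame y).ge
  refine LinearMap.IsOrthoᵢ.separatingLeft_of_not_isOrtho_basis_self b ?_ ?_
  · simpa only [b, Module.Basis.coe_mk] using isOrthoᵢ_frame y
  · simpa only [b, Module.Basis.coe_mk, gMForm_apply] using gM_frame_self_ne_zero y

end Mrugala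

theorem mrugala_metric_signature_general {n : ℕ} (y : Fin n → ℝ) :
    (∀ u v : TVec n, gM y u v = gM y v u) ∧
    (∀ v : TVec n, (∀ w, gM y v w = 0) → v = 0) ∧
    ∃ b : Fin (n + 1 + n) → TVec n,
      Submodule.span ℝ (Set.range b) = ⊤ ∧
      (∀ i j, i ≠ j → gM y (b i) (b j) = 0) ∧
      (∀ i : Fin (n + 1 + n),
        gM y (b i) (b i) = if (i : ℕ) < n + 1 then 1 else -1) := by
  open Mrugala in
  refine ⟨gM_comm y, gMForm_separatingLeft y, frame y, span_frame y, fun i j hij => ?_, fun i => ?_⟩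
  · rw [gM_frame_frame, if_neg hij]
  · rw [gM_frame_frame, if_pos rfl]

/-- at each point of {y_a > 0}, the Mrugala metric is a
nondegenerate symmetric bilinear form of signature (n+1, n): there is an
orthogonal basis with n+1 vectors of norm +1 and n vectors of norm −1. -/
theorem mrugala_metric_signature {n : ℕ} (y : Fin n → ℝ) (hy : ∀ a, 0 < y a) :
    (∀ u v : TVec n, gM y u v = gM y v u) ∧
    (∀ v : TVec n, (∀ w, gM y v w = 0) → v = 0) ∧
    ∃ b : Fin (n + 1 + n) → TVec n,
      Submodule.span ℝ (Set.range b) = ⊤ ∧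
      (∀ i j, i ≠ j → gM y (b i) (b j) = 0) ∧
      (∀ i : Fin (n + 1 + n),
        gM y (b i) (b i) = if (i : ℕ) < n + 1 then 1 else -1) :=
  mrugala_metric_signature_general y
end

section
/- Along the contact Hamiltonian flow dx^a/dt = 0, dy_a/dt = ∂ϖ/∂x^a − y_a, dz/dt = ϖ(x) − z, the Mrugala metric norm of the velocity satisfies g^M(X_h, X_h) = h², where h = ϖ(x) − z; consequently the curve length from time t to the asymptotic limit t = ∞ equals |h(x(t), y(t), z(t))|, and this length decays exponentially as e^{-t}|h(x(0),y(0),z(0))|. -/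
open MeasureTheory

/-- The contact Hamiltonian h(x,y,z) = ϖ(x) − z. -/
noncomputable def ham {n : ℕ} (ϖ : (Fin n → ℝ) → ℝ) (p : TVec n) : ℝ :=
  ϖ p.1 - p.2.2

/-- Its contact Hamiltonian vector field: ẋ = 0, ẏ_a = ∂ϖ/∂x^a − y_a,
ż = ϖ(x) − z. -/
noncomputable def Xham {n : ℕ} (ϖ : (Fin n → ℝ) → ℝ) (p : TVec n) : TVec n :=
  (0, fun a => fderiv ℝ ϖ p.1 (Pi.single a 1) - p.2.1 a, ϖ p.1 - p.2.2)

/-- g^M(X_h, X_h) = h², so the curve length from time t to the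
asymptotic limit t = ∞ along any solution equals |h(x(t),y(t),z(t))|, which
decays exponentially as e^{-t} |h(x(0),y(0),z(0))|. -/
theorem mrugala_length_to_equilibrium {n : ℕ}
    (ϖ : (Fin n → ℝ) → ℝ) (hϖ : ContDiff ℝ (⊤ : ℕ∞) ϖ)
    (x : ℝ → Fin n → ℝ) (y : ℝ → Fin n → ℝ) (z : ℝ → ℝ)
    (hypos : ∀ a t, 0 < y t a)
    (hx : ∀ a t, HasDerivAt (fun s => x s a) 0 t)
    (hy : ∀ a t, HasDerivAt (fun s => y s a)
      (fderiv ℝ ϖ (x t) (Pi.single a 1) - y t a) t)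
    (hz : ∀ t, HasDerivAt z (ϖ (x t) - z t) t) :
    (∀ p : TVec n, gM p.2.1 (Xham ϖ p) (Xham ϖ p) = (ham ϖ p) ^ 2) ∧
    (∀ t : ℝ,
      (∫ s in Set.Ioi t, Real.sqrt
        (gM (y s) (Xham ϖ (x s, y s, z s)) (Xham ϖ (x s, y s, z s))))
        = |ham ϖ (x t, y t, z t)|) ∧
    (∀ t : ℝ, |ham ϖ (x t, y t, z t)|
        = Real.exp (-t) * |ham ϖ (x 0, y 0, z 0)|) := by
  -- abbreviate h along the flow
  set H : ℝ → ℝ := fun t => ϖ (x t) - z t with hH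
  -- derivative of H is -H
  have hX : ∀ t, HasDerivAt x 0 t := by
    intro t
    rw [hasDerivAt_pi]
    intro a
    simpa using hx a t
  have hϖx : ∀ t, HasDerivAt (fun s => ϖ (x s)) 0 t := by
    intro t
    have := ((hϖ.differentiable (by simp) (x t)).hasFDerivAt).comp_hasDerivAt t (hX t)
    exact this.congr_deriv (by simp)
  have hH' : ∀ t, HasDerivAt H (-H t) t := by
    intro t
    have := (hϖx t).sub (hz t)
    exact this.congr_deriv (by simp [hH])
  -- exp t * H t is constant
  have hconst : ∀ t, Real.exp t * H t = H 0 := by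
    have hd : ∀ t, HasDerivAt (fun t => Real.exp t * H t) 0 t := by
      intro t
      have := (Real.hasDerivAt_exp t).mul (hH' t)
      exact this.congr_deriv (by ring)
    intro t
    have := is_const_of_deriv_eq_zero (f := fun t => Real.exp t * H t)
      (fun s => (hd s).differentiableAt) (fun s => (hd s).deriv) t 0
    simpa using this
  have hHt : ∀ t, H t = Real.exp (-t) * H 0 := by
    intro t
    rw [← hconst t, Real.exp_neg]
    field_simp
  -- part 1
  have part1 : ∀ p : TVec n, gM p.2.1 (Xham ϖ p) (Xham ϖ p) = (ham ϖ p) ^ 2 := by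
    intro p
    simp [gM, Xham, lamForm, ham, sq]
  have habs : ∀ t, |ham ϖ (x t, y t, z t)| = Real.exp (-t) * |ham ϖ (x 0, y 0, z 0)| := by
    intro t
    have h0 : ham ϖ (x t, y t, z t) = H t := rfl
    have h1 : ham ϖ (x 0, y 0, z 0) = H 0 := rfl
    rw [h0, h1, hHt t, abs_mul, Real.abs_exp]
  refine ⟨part1, ?_, habs⟩
  intro t
  have heq : ∀ s : ℝ, Real.sqrt
      (gM (y s) (Xham ϖ (x s, y s, z s)) (Xham ϖ (x s, y s, z s)))
      = Real.exp (-s) * |ham ϖ (x 0, y 0, z 0)| := by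
    intro s
    rw [part1 (x s, y s, z s), Real.sqrt_sq_eq_abs, habs s]
  calc (∫ s in Set.Ioi t, Real.sqrt
        (gM (y s) (Xham ϖ (x s, y s, z s)) (Xham ϖ (x s, y s, z s))))
      = ∫ s in Set.Ioi t, Real.exp (-s) * |ham ϖ (x 0, y 0, z 0)| := by
        simp only [heq]
    _ = (∫ s in Set.Ioi t, Real.exp (-s)) * |ham ϖ (x 0, y 0, z 0)| := by
        rw [integral_mul_const]
    _ = Real.exp (-t) * |ham ϖ (x 0, y 0, z 0)| := by
        rw [integral_exp_neg_Ioi]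
    _ = |ham ϖ (x t, y t, z t)| := (habs t).symm
end
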